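/- arXiv:1712.00150 — 2 statements merged into one kernel-verified Lean document; each statement's English description precedes it below -/
import Mathlib

section
/- The standard pattern T(13,5) = {(13x+5y, y) : x, y ∈ ℤ} is a (3,1) broadcast on the infinite grid; that is, for every vertex v ∈ ℤ×ℤ, the total signal received at v from towers of strength 3 located at the points of T(13,5) is at least 1. -/
open Filter Topology

/-- Graph (L¹) distance on the infinite grid ℤ×ℤ. -/
def gridDist (u v : ℤ × ℤ) : ℕ := (u.1 - v.1).natAbs + (u.2 - v.2).natAbs

open Classical in
/-- Total signal received at `v` from towers of strength `t` located at the points of `S`: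
the finite sum `∑_{T ∈ S, dist(v,T) < t} (t − dist(v,T))`. -/
noncomputable def totalSignal (t : ℕ) (S : Set (ℤ × ℤ)) (v : ℤ × ℤ) : ℕ :=
  ∑ T ∈ (Finset.Icc (v.1 - (t : ℤ)) (v.1 + (t : ℤ)) ×ˢ
      Finset.Icc (v.2 - (t : ℤ)) (v.2 + (t : ℤ))).filter
      (fun T => T ∈ S ∧ gridDist v T < t),
    (t - gridDist v T)

/-- `S` is a `(t,r)` broadcast if every vertex receives total signal at least `r`. -/
def IsBroadcast (t r : ℕ) (S : Set (ℤ × ℤ)) : Prop :=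
  ∀ v : ℤ × ℤ, r ≤ totalSignal t S v

/-- The standard pattern `T(d,e) = {(dx+ey, y) : x, y ∈ ℤ}`. -/
def stdPattern (d e : ℤ) : Set (ℤ × ℤ) := {p | ∃ x y : ℤ, p = (d * x + e * y, y)}

open Classical in
/-- The number of points of `S` in the square `V_n = {(a,b) : |a| ≤ n, |b| ≤ n}`. -/
noncomputable def gridCount (S : Set (ℤ × ℤ)) (n : ℕ) : ℕ :=
  ((Finset.Icc (-(n : ℤ)) (n : ℤ) ×ˢ Finset.Icc (-(n : ℤ)) (n : ℤ)).filter
    (fun v => v ∈ S)).card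

/-!
The pattern `T(13,5)` is the lattice `{p | 13 ∣ p.1 - 5 p.2}`, and the thirteen offsets `δ` of
the diamond `|δ₁| + |δ₂| ≤ 2` take all thirteen values of `δ₁ - 5 δ₂` modulo 13. Hence the
translates of this diamond by `T(13,5)` tile the grid (a perfect code of radius 2), so every vertex
lies within distance 2 of a tower, which alone sends it signal at least 1.
-/

theorem le_totalSignal_of_mem {t : ℕ} {S : Set (ℤ × ℤ)} {v T : ℤ × ℤ} (hT : T ∈ S) :
    t - gridDist v T ≤ totalSignal t S v := by
  rcases lt_or_ge (gridDist v T) t with hd | hd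
  · refine Finset.single_le_sum (f := fun T => t - gridDist v T) (fun _ _ => Nat.zero_le _) ?_
    simp only [Finset.mem_filter, Finset.mem_product, Finset.mem_Icc]
    unfold gridDist at hd
    exact ⟨⟨⟨by omega, by omega⟩, by omega, by omega⟩, hT, hd⟩
  · simp [Nat.sub_eq_zero_of_le hd]

theorem isBroadcast_one_of_forall_exists_gridDist_lt {t : ℕ} {S : Set (ℤ × ℤ)}
    (h : ∀ v, ∃ T ∈ S, gridDist v T < t) : IsBroadcast t 1 S := fun v => by
  obtain ⟨T, hT, hd⟩ := h v
  exact (Nat.le_sub_of_add_le' hd).trans (le_totalSignal_of_mem hT)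

theorem mem_stdPattern_iff {d e : ℤ} {p : ℤ × ℤ} : p ∈ stdPattern d e ↔ d ∣ p.1 - e * p.2 := by
  constructor
  · rintro ⟨x, y, rfl⟩
    exact ⟨x, by ring⟩
  · rintro ⟨x, hx⟩
    exact ⟨x, p.2, Prod.ext (by linarith) rfl⟩

-- The redundant bounds `δᵢ ∈ [-2, 2]` make the statement decidable.
theorem exists_natAbs_add_natAbs_le_two_sub_five_mul (s : ZMod 13) :
    ∃ δ₁ ∈ Finset.Icc (-2 : ℤ) 2, ∃ δ₂ ∈ Finset.Icc (-2 : ℤ) 2,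
      δ₁.natAbs + δ₂.natAbs ≤ 2 ∧ ((δ₁ - 5 * δ₂ : ℤ) : ZMod 13) = s := by
  revert s
  decide

theorem exists_gridDist_lt_three_stdPattern_13_5 (v : ℤ × ℤ) :
    ∃ T ∈ stdPattern 13 5, gridDist v T < 3 := by
  obtain ⟨δ₁, -, δ₂, -, hδ, hs⟩ :=
    exists_natAbs_add_natAbs_le_two_sub_five_mul ((v.1 - 5 * v.2 : ℤ) : ZMod 13)
  refine ⟨(v.1 - δ₁, v.2 - δ₂), mem_stdPattern_iff.2 ?_, ?_⟩
  · obtain ⟨k, hk⟩ := (ZMod.intCast_eq_intCast_iff_dvd_sub _ _ 13).1 hs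
    exact ⟨k, by push_cast at hk ⊢; linarith⟩
  · simp only [gridDist, sub_sub_cancel]
    omega

theorem stmt13 : IsBroadcast 3 1 (stdPattern 13 5) :=
  isBroadcast_one_of_forall_exists_gridDist_lt exists_gridDist_lt_three_stdPattern_13_5
end

section
/- The standard pattern T(18,5) = {(18x+5y, y) : x, y ∈ ℤ} is a (4,2) broadcast on the infinite grid; that is, for every vertex v ∈ ℤ×ℤ, the total signal received at v from towers of strength 4 located at the points of T(18,5) is at least 2. -/
/-!
The pattern `T(d,e)` is a lattice, so it is invariant under translation by its own points, and
every vertex is such a translate of a point `(r, 0)` with `0 ≤ r < d`. For `T(18,5)` six towers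
near the segment `[0, 18) × {0}` already give signal at least 2 to each of these 18 points, a
finite computation.
-/

open Filter Topology

lemma gridDist_add_add (u v w : ℤ × ℤ) : gridDist (u + w) (v + w) = gridDist u v := by
  simp only [gridDist, Prod.fst_add, Prod.snd_add, add_sub_add_right_eq_sub]

open Classical in
lemma sum_le_totalSignal {t : ℕ} {S : Set (ℤ × ℤ)} {v : ℤ × ℤ} {F : Finset (ℤ × ℤ)}
    (hF : ↑F ⊆ S) : ∑ T ∈ F, (t - gridDist v T) ≤ totalSignal t S v := by
  have hnear : F.filter (fun T => gridDist v T < t) ⊆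
      (Finset.Icc (v.1 - (t : ℤ)) (v.1 + (t : ℤ)) ×ˢ
        Finset.Icc (v.2 - (t : ℤ)) (v.2 + (t : ℤ))).filter
        (fun T => T ∈ S ∧ gridDist v T < t) := by
    intro T hT
    obtain ⟨hTF, hd⟩ := Finset.mem_filter.1 hT
    rw [Finset.mem_filter, Finset.mem_product, Finset.mem_Icc, Finset.mem_Icc]
    unfold gridDist at hd ⊢
    exact ⟨⟨⟨by omega, by omega⟩, by omega, by omega⟩, hF hTF, hd⟩
  -- towers at distance `≥ t` contribute the truncated difference `t - d = 0`
  calc ∑ T ∈ F, (t - gridDist v T)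
      = ∑ T ∈ F.filter (fun T => gridDist v T < t), (t - gridDist v T) := by
        refine (Finset.sum_filter_of_ne fun T _ h => ?_).symm
        omega
    _ ≤ totalSignal t S v := Finset.sum_le_sum_of_subset hnear

lemma add_mem_stdPattern {d e : ℤ} {p q : ℤ × ℤ} (hp : p ∈ stdPattern d e)
    (hq : q ∈ stdPattern d e) : p + q ∈ stdPattern d e := by
  obtain ⟨x, y, rfl⟩ := hp
  obtain ⟨x', y', rfl⟩ := hq
  exact ⟨x + x', y + y', by rw [Prod.mk_add_mk]; congr 1; ring⟩

lemma exists_sub_mem_stdPattern {d : ℤ} (hd : 0 < d) (e : ℤ) (v : ℤ × ℤ) :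
    ∃ r : ℕ, (r : ℤ) < d ∧ v - ((r : ℤ), 0) ∈ stdPattern d e := by
  refine ⟨((v.1 - e * v.2) % d).toNat, ?_, (v.1 - e * v.2) / d, v.2, ?_⟩
  · have := Int.emod_lt_of_pos (v.1 - e * v.2) hd
    omega
  · have := Int.mul_ediv_add_emod (v.1 - e * v.2) d
    have := Int.emod_nonneg (v.1 - e * v.2) hd.ne'
    refine Prod.ext ?_ (by simp)
    simp only [Prod.fst_sub]
    omega

def nearTowers : Finset (ℤ × ℤ) := {(0, 0), (5, 1), (8, -2), (10, 2), (13, -1), (18, 0)}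

lemma nearTowers_subset_stdPattern : ↑nearTowers ⊆ stdPattern 18 5 := by
  intro T hT
  simp only [nearTowers, Finset.coe_insert, Finset.coe_singleton, Set.mem_insert_iff,
    Set.mem_singleton_iff] at hT
  rcases hT with rfl | rfl | rfl | rfl | rfl | rfl
  exacts [⟨0, 0, rfl⟩, ⟨0, 1, rfl⟩, ⟨1, -2, rfl⟩, ⟨0, 2, rfl⟩, ⟨1, -1, rfl⟩, ⟨1, 0, rfl⟩]

lemma two_le_sum_nearTowers :
    ∀ r ∈ Finset.range 18, 2 ≤ ∑ T ∈ nearTowers, (4 - gridDist ((r : ℤ), 0) T) := by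
  decide

theorem stmt18 : IsBroadcast 4 2 (stdPattern 18 5) := by
  intro v
  obtain ⟨r, hr, hp⟩ := exists_sub_mem_stdPattern (d := 18) (by norm_num) 5 v
  set p := v - ((r : ℤ), 0)
  have hv : v = ((r : ℤ), 0) + p := by simp only [p, add_sub_cancel]
  have htowers : ↑(nearTowers.map (addRightEmbedding p)) ⊆ stdPattern 18 5 := by
    intro T hT
    obtain ⟨T₀, hT₀, rfl⟩ := Finset.mem_map.1 hT
    exact add_mem_stdPattern (nearTowers_subset_stdPattern hT₀) hp
  calc 2 ≤ ∑ T ∈ nearTowers, (4 - gridDist ((r : ℤ), 0) T) :=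
        two_le_sum_nearTowers r (Finset.mem_range.2 (by omega))
    _ = ∑ T ∈ nearTowers.map (addRightEmbedding p), (4 - gridDist v T) := by
        simp only [Finset.sum_map, addRightEmbedding_apply, hv, gridDist_add_add]
    _ ≤ totalSignal 4 (stdPattern 18 5) v := sum_le_totalSignal htowers
end
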